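/- Let ‖·‖ be a URTC-norm on ℝ², let d > 0, and let φ : ℝ² → ℝ² be a map that preserves distance d. Then for every positive integer n, φ preserves distance n·d (i.e., ‖x − y‖ = n·d implies ‖φ(x) − φ(y)‖ = n·d); moreover, whenever a, b, c ∈ ℝ² satisfy ‖a − b‖ = d, ‖b − c‖ = (n − 1)d and ‖a − c‖ = n·d, the images satisfy ‖φ(a) − φ(b)‖ = d, ‖φ(b) − φ(c)‖ = (n − 1)d and ‖φ(a) − φ(c)‖ = n·d. -/

import Mathlib

/-!
Call `x` an apex over the base `(a, b)` if `‖a - x‖ = ‖b - x‖ = d`. In a URTC plane the two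
apexes over a base are exchanged by `x ↦ a + b - x`, so they sum to `a + b`. A map preserving
distance `d` sends apexes to apexes, and the heart of the proof is that it never merges the two
apexes `r, s` over a base, i.e. never collapses a rhombus diagonal `s - r`. This needs a
continuity argument: the positively oriented equilateral triangles `(0, u, v)` form a connected
set, so by the intermediate value theorem every rhombus diagonal lies at distance `d` from
another one, and a collapse would produce a rhombus diagonal of norm `d` in the image, that is,
four points at mutual distance `d`, which URTC forbids. Hence `φ` respects the sum rule for
apexes, which forces `φ (2y - x) = 2 φ y - φ x` whenever `‖x - y‖ = d`: `φ` maps arithmetic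
progressions with step of norm `d` to arithmetic progressions, and so preserves distance `n d`.
-/

/-- `N` is a norm on `ℝ²`. -/
structure IsNorm (N : ℝ × ℝ → ℝ) : Prop where
  add_le : ∀ x y : ℝ × ℝ, N (x + y) ≤ N x + N y
  smul_eq : ∀ (c : ℝ) (x : ℝ × ℝ), N (c • x) = |c| * N x
  eq_zero_of : ∀ x : ℝ × ℝ, N x = 0 → x = 0

/-- `N` is a URTC-norm: for every `a b` at `N`-distance `1`, there are exactly two
points `x` with `N (a - x) = 1` and `N (b - x) = 1`. -/
def IsURTC (N : ℝ × ℝ → ℝ) : Prop :=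
  ∀ a b : ℝ × ℝ, N (a - b) = 1 →
    {x : ℝ × ℝ | N (a - x) = 1 ∧ N (b - x) = 1}.encard = 2

open Set Metric Module Pointwise

section Apexes

variable {E : Type*} [NormedAddCommGroup E] {d : ℝ} {a b r s ω : E}

def apexes (d : ℝ) (a b : E) : Set E := {x | ‖a - x‖ = d ∧ ‖b - x‖ = d}

def IsURTCSpace (E : Type*) [NormedAddCommGroup E] : Prop :=
  ∀ a b : E, ‖a - b‖ = 1 → (apexes 1 a b).encard = 2

def IsRhombusDiagonal (d : ℝ) (ω : E) : Prop :=
  ∃ u v : E, ‖u‖ = d ∧ ‖v‖ = d ∧ ‖u - v‖ = d ∧ ω = u + v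

lemma add_sub_mem_apexes (hr : r ∈ apexes d a b) : a + b - r ∈ apexes d a b := by
  constructor
  · rw [show a - (a + b - r) = -(b - r) by abel, norm_neg, hr.2]
  · rw [show b - (a + b - r) = -(a - r) by abel, norm_neg, hr.1]

lemma isRhombusDiagonal_sub_of_mem_apexes (hab : ‖a - b‖ = d) (hr : r ∈ apexes d a b)
    (hrs : r + s = a + b) : IsRhombusDiagonal d (s - r) :=
  ⟨a - r, b - r, hr.1, hr.2, by rwa [sub_sub_sub_cancel_right],
    by rw [eq_sub_of_add_eq' hrs]; abel⟩

variable [NormedSpace ℝ E]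

lemma apexes_smul {c : ℝ} (hc : c ≠ 0) (d : ℝ) (a b : E) :
    apexes (|c| * d) (c • a) (c • b) = c • apexes d a b := by
  ext x
  have key : ∀ y : E, ‖c • y - x‖ = |c| * ‖y - c⁻¹ • x‖ := fun y => by
    rw [← Real.norm_eq_abs, ← norm_smul, smul_sub, smul_inv_smul₀ hc]
  simp only [apexes, mem_smul_set_iff_inv_smul_mem₀ hc, mem_ofPred_eq, key,
    mul_right_inj' (abs_ne_zero.mpr hc)]

lemma encard_apexes (hU : IsURTCSpace E) (hd : 0 < d) (hab : ‖a - b‖ = d) :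
    (apexes d a b).encard = 2 := by
  have h₁ : ‖d⁻¹ • a - d⁻¹ • b‖ = 1 := by
    rw [← smul_sub, norm_smul, hab, Real.norm_of_nonneg (inv_nonneg.2 hd.le),
      inv_mul_cancel₀ hd.ne']
  have h := apexes_smul hd.ne' 1 (d⁻¹ • a) (d⁻¹ • b)
  rw [abs_of_pos hd, mul_one, smul_inv_smul₀ hd.ne', smul_inv_smul₀ hd.ne'] at h
  rw [h, ← image_smul, (smul_right_injective E hd.ne').encard_image, hU _ _ h₁]

lemma apexes_nonempty (hU : IsURTCSpace E) (hd : 0 < d) (hab : ‖a - b‖ = d) :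
    (apexes d a b).Nonempty :=
  nonempty_of_encard_ne_zero (by rw [encard_apexes hU hd hab]; norm_num)

lemma add_sub_ne_of_mem_apexes (hd : 0 < d) (hab : ‖a - b‖ = d) (hr : r ∈ apexes d a b) :
    a + b - r ≠ r := by
  intro h
  have : a - b = (2 : ℝ) • (a - r) := by linear_combination (norm := module) -h
  rw [this, norm_smul, hr.1, Real.norm_two] at hab
  linarith

lemma add_eq_of_mem_apexes (hU : IsURTCSpace E) (hd : 0 < d) (hab : ‖a - b‖ = d)
    (hr : r ∈ apexes d a b) (hs : s ∈ apexes d a b) (hrs : r ≠ s) : r + s = a + b := by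
  obtain ⟨p, q, -, hpq⟩ := encard_eq_two.mp (encard_apexes hU hd hab)
  have hr' := add_sub_mem_apexes hr
  have hne := add_sub_ne_of_mem_apexes hd hab hr
  rw [hpq] at hr hs hr'
  suffices a + b - r = s by rw [← this]; abel
  grind

lemma IsRhombusDiagonal.le_norm (hω : IsRhombusDiagonal d ω) : d ≤ ‖ω‖ := by
  obtain ⟨u, v, hu, -, huv, rfl⟩ := hω
  have h := norm_add_le (u + v) (u - v)
  rw [show u + v + (u - v) = (2 : ℝ) • u by module, norm_smul, Real.norm_two, hu, huv] at h
  linarith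

lemma IsRhombusDiagonal.norm_ne (hU : IsURTCSpace E) (hd : 0 < d) (hω : IsRhombusDiagonal d ω) :
    ‖ω‖ ≠ d := by
  obtain ⟨u, v, hu, hv, huv, rfl⟩ := hω
  intro huv'
  -- `0, u, v, u + v` would be four points at mutual distance `d`: three apexes over `(0, u)`.
  have h0u : ‖0 - u‖ = d := by rw [zero_sub, norm_neg, hu]
  have hv_mem : v ∈ apexes d 0 u := ⟨by rw [zero_sub, norm_neg, hv], huv⟩
  have huv_mem : u + v ∈ apexes d 0 u :=
    ⟨by rw [zero_sub, norm_neg, huv'], by rw [sub_add_cancel_left, norm_neg, hv]⟩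
  have hne : v ≠ u + v := fun h => by
    rw [add_eq_right.mp h.symm, norm_zero] at hu; exact hd.ne hu
  have hsum := add_eq_of_mem_apexes hU hd h0u hv_mem huv_mem hne
  have hv0 : v = 0 := by
    have : (2 : ℝ) • v = 0 := by linear_combination (norm := module) hsum
    simpa using this
  rw [hv0, norm_zero] at hv
  exact hd.ne hv

end Apexes

section Orientation

def cross (u v : ℝ × ℝ) : ℝ := u.1 * v.2 - u.2 * v.1

lemma cross_sub_right (x y : ℝ × ℝ) : cross x (x - y) = -cross x y := by
  simp only [cross, Prod.fst_sub, Prod.snd_sub]; ring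

lemma exists_eq_smul_of_cross_eq_zero {u v : ℝ × ℝ} (hu : u ≠ 0) (h : cross u v = 0) :
    ∃ k : ℝ, v = k • u := by
  obtain ⟨u₁, u₂⟩ := u
  obtain ⟨v₁, v₂⟩ := v
  simp only [cross] at h
  by_cases h₁ : u₁ = 0
  · have h₂ : u₂ ≠ 0 := fun h₂ => hu (by rw [h₁, h₂]; rfl)
    refine ⟨v₂ / u₂, Prod.ext ?_ ?_⟩
    · simp only [h₁, zero_mul, zero_sub, neg_eq_zero, mul_eq_zero, h₂, false_or] at h
      simp [h, h₁]
    · simp [h₂]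
  · refine ⟨v₁ / u₁, Prod.ext ?_ ?_⟩
    · simp [h₁]
    · simp only [Prod.smul_mk, smul_eq_mul]
      field_simp
      linarith

variable {E : Type*} [NormedAddCommGroup E] [NormedSpace ℝ E] (e : E ≃L[ℝ] ℝ × ℝ)
  {d : ℝ} {u v w ω : E}

lemma cross_ne_zero (hd : 0 < d) (hu : ‖u‖ = d) (hv : ‖v‖ = d) (huv : ‖u - v‖ = d) :
    cross (e u) (e v) ≠ 0 := by
  intro h
  have hu0 : e u ≠ 0 := by
    rw [map_ne_zero_iff _ e.injective]; rintro rfl; rw [norm_zero] at hu; exact hd.ne hu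
  obtain ⟨k, hk⟩ := exists_eq_smul_of_cross_eq_zero hu0 h
  rw [← map_smul, e.injective.eq_iff] at hk
  subst hk
  have h₁ : |k| = 1 := by
    rw [norm_smul, Real.norm_eq_abs, hu] at hv; field_simp at hv; linarith
  have h₂ : |1 - k| = 1 := by
    rw [show u - k • u = (1 - k) • u by module, norm_smul, Real.norm_eq_abs, hu] at huv
    field_simp at huv; linarith
  have hk₁ : k ^ 2 = 1 := by rw [← sq_abs, h₁, one_pow]
  have hk₂ : (1 - k) ^ 2 = 1 := by rw [← sq_abs, h₂, one_pow]
  nlinarith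

def orientedTriangles (d : ℝ) : Set (E × E) :=
  {p | ‖p.1‖ = d ∧ ‖p.2‖ = d ∧ ‖p.1 - p.2‖ = d ∧ 0 ≤ cross (e p.1) (e p.2)}

variable {e}

lemma isCompact_orientedTriangles [ProperSpace E] : IsCompact (orientedTriangles e d) := by
  refine ((isCompact_sphere (0 : E) d).prod (isCompact_sphere 0 d)).of_isClosed_subset ?_
    fun p hp => ⟨by simpa using hp.1, by simpa using hp.2.1⟩
  simp only [orientedTriangles, ofPred_and]
  refine .inter (isClosed_eq (by fun_prop) (by fun_prop)) (.inter (isClosed_eq (by fun_prop)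
    (by fun_prop)) (.inter (isClosed_eq (by fun_prop) (by fun_prop)) (isClosed_le (by fun_prop)
    (by unfold cross; fun_prop))))

lemma neg_mem_orientedTriangles {p : E × E} (hp : p ∈ orientedTriangles e d) :
    -p ∈ orientedTriangles e d := by
  obtain ⟨h₁, h₂, h₃, h₄⟩ := hp
  refine ⟨by simpa using h₁, by simpa using h₂, ?_, ?_⟩
  · rw [Prod.fst_neg, Prod.snd_neg, neg_sub_neg, norm_sub_rev, h₃]
  · simpa [cross] using h₄

lemma mem_apexes_of_mem_orientedTriangles (h : (u, v) ∈ orientedTriangles e d) :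
    v ∈ apexes d 0 u :=
  ⟨by rw [zero_sub, norm_neg, h.2.1], h.2.2.1⟩

lemma isRhombusDiagonal_of_mem_orientedTriangles {p : E × E} (hp : p ∈ orientedTriangles e d) :
    IsRhombusDiagonal d (p.1 + p.2) :=
  ⟨p.1, p.2, hp.1, hp.2.1, hp.2.2.1, rfl⟩

lemma exists_mem_orientedTriangles (hU : IsURTCSpace E) (hd : 0 < d) (hu : ‖u‖ = d) :
    ∃ v, (u, v) ∈ orientedTriangles e d := by
  obtain ⟨v, hv⟩ := apexes_nonempty hU hd (by rwa [zero_sub, norm_neg] : ‖0 - u‖ = d)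
  have hv' : ‖v‖ = d := by rw [← norm_neg, ← zero_sub, hv.1]
  rcases (cross_ne_zero e hd hu hv' hv.2).lt_or_gt with hneg | hpos
  · refine ⟨u - v, hu, hv.2, by rw [sub_sub_cancel, hv'], ?_⟩
    rw [map_sub, cross_sub_right]; linarith
  · exact ⟨v, hu, hv', hv.2, hpos.le⟩

lemma eq_of_mem_orientedTriangles (hU : IsURTCSpace E) (hd : 0 < d)
    (h : (u, v) ∈ orientedTriangles e d) (h' : (u, w) ∈ orientedTriangles e d) : v = w := by
  by_contra hvw
  have hsum := add_eq_of_mem_apexes hU hd (by rw [zero_sub, norm_neg, h.1])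
    (mem_apexes_of_mem_orientedTriangles h) (mem_apexes_of_mem_orientedTriangles h') hvw
  have hw : w = u - v := by rw [zero_add] at hsum; rw [← hsum]; abel
  have h₄ := h'.2.2.2
  rw [hw, map_sub, cross_sub_right] at h₄
  exact cross_ne_zero e hd h.1 h.2.1 h.2.2.1 (by linarith [h.2.2.2])

/-- `(u, v) ↦ u` maps the oriented triangles bijectively onto the sphere of radius `d`, and is a
closed map by compactness; so they inherit the connectedness of the sphere. -/
lemma isPreconnected_orientedTriangles [ProperSpace E] (hE : 1 < Module.rank ℝ E)
    (hU : IsURTCSpace E) (hd : 0 < d) : IsPreconnected (orientedTriangles e d) := by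
  set Γ := orientedTriangles e d
  have : CompactSpace Γ := isCompact_iff_compactSpace.mp isCompact_orientedTriangles
  let π : Γ → E := fun p => p.1.1
  have hπ : Continuous π := by fun_prop
  have hinj : Function.Injective π := by
    rintro ⟨⟨u, v⟩, hp⟩ ⟨⟨u', w⟩, hq⟩ (rfl : u = u')
    simp [eq_of_mem_orientedTriangles hU hd hp hq]
  have hsurj : sphere (0 : E) d ⊆ range π := fun u hu => by
    obtain ⟨v, hv⟩ := exists_mem_orientedTriangles hU hd (by simpa using hu)
    exact ⟨⟨(u, v), hv⟩, rfl⟩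
  have hpre := (isPreconnected_sphere hE (0 : E) d).preimage_of_isClosedMap hinj
    hπ.isClosedMap hsurj
  rw [preimage_eq_univ_iff.mpr (fun u ⟨p, hp⟩ => hp ▸ by simpa using p.2.1)] at hpre
  simpa using hpre.image _ continuous_subtype_val.continuousOn

lemma IsRhombusDiagonal.exists_mem_orientedTriangles (hω : IsRhombusDiagonal d ω) :
    ∃ p ∈ orientedTriangles e d, p.1 + p.2 = ω := by
  obtain ⟨u, v, hu, hv, huv, rfl⟩ := hω
  rcases le_total 0 (cross (e u) (e v)) with h | h
  · exact ⟨(u, v), ⟨hu, hv, huv, h⟩, rfl⟩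
  · refine ⟨(v, u), ⟨hv, hu, by rw [norm_sub_rev, huv], ?_⟩, add_comm v u⟩
    simp only [cross] at h ⊢; linarith

end Orientation

lemma IsRhombusDiagonal.exists_norm_sub_eq {E : Type*} [NormedAddCommGroup E] [NormedSpace ℝ E]
    [FiniteDimensional ℝ E] (hE : finrank ℝ E = 2) (hU : IsURTCSpace E) {d : ℝ}
    (hd : 0 < d) {ω : E} (hω : IsRhombusDiagonal d ω) :
    ∃ ω', IsRhombusDiagonal d ω' ∧ ‖ω' - ω‖ = d := by
  let e : E ≃L[ℝ] ℝ × ℝ := .ofFinrankEq (by simp [hE])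
  have hrank : 1 < Module.rank ℝ E := by
    rw [← finrank_eq_rank, hE]; norm_num
  obtain ⟨p, hp, rfl⟩ := hω.exists_mem_orientedTriangles (e := e)
  set f : E × E → ℝ := fun q => ‖q.1 + q.2 - (p.1 + p.2)‖
  have hf₀ : f p = 0 := by simp [f]
  have hf₁ : f (-p) = 2 * ‖p.1 + p.2‖ := by
    simp only [f, Prod.fst_neg, Prod.snd_neg]
    rw [show -p.1 + -p.2 - (p.1 + p.2) = (-2 : ℝ) • (p.1 + p.2) by module, norm_smul]
    norm_num
  obtain ⟨q, hq, hqd⟩ := (isPreconnected_orientedTriangles hrank hU hd).intermediate_value hp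
    (neg_mem_orientedTriangles hp) (f := f) (by fun_prop)
    ⟨hf₀ ▸ hd.le, by linarith [(isRhombusDiagonal_of_mem_orientedTriangles hp).le_norm]⟩
  exact ⟨_, isRhombusDiagonal_of_mem_orientedTriangles hq, hqd⟩

section PreservesDist

variable {E F : Type*} [NormedAddCommGroup E] [NormedAddCommGroup F]

def PreservesDist (φ : E → F) (d : ℝ) : Prop :=
  ∀ x y, ‖x - y‖ = d → ‖φ x - φ y‖ = d

namespace PreservesDist

variable {φ : E → F} {d : ℝ} {a b r s x y : E}

lemma mapsTo_apexes (hφ : PreservesDist φ d) (a b : E) :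
    MapsTo φ (apexes d a b) (apexes d (φ a) (φ b)) :=
  fun _ hx => ⟨hφ _ _ hx.1, hφ _ _ hx.2⟩

variable [NormedSpace ℝ E] [NormedSpace ℝ F] [FiniteDimensional ℝ E]

/-- Take a rhombus diagonal `u + v` with `‖u + v - (t - s)‖ = d`. Then `s` and `w = s + u + v`
are the two apexes over `(s + u, s + v)`, so `‖φ w - φ s‖` is `0` or the norm of a rhombus
diagonal, never `d`; but if `φ s = φ t` it equals `‖φ w - φ t‖ = d`. -/
lemma apply_ne_apply_of_isRhombusDiagonal (hφ : PreservesDist φ d) (hE : finrank ℝ E = 2)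
    (hUE : IsURTCSpace E) (hUF : IsURTCSpace F) (hd : 0 < d) {s t : E}
    (hst : IsRhombusDiagonal d (t - s)) : φ s ≠ φ t := by
  intro heq
  obtain ⟨ω, ⟨u, v, hu, hv, huv, rfl⟩, hωd⟩ := hst.exists_norm_sub_eq hE hUE hd
  have hbase : ‖(s + u) - (s + v)‖ = d := by rwa [add_sub_add_left_eq_sub]
  have hs : s ∈ apexes d (s + u) (s + v) := ⟨by simpa using hu, by simpa using hv⟩
  have hw : s + (u + v) ∈ apexes d (s + u) (s + v) := by
    convert add_sub_mem_apexes hs using 1; abel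
  have hwt : ‖φ (s + (u + v)) - φ s‖ = d := by
    rw [heq]; exact hφ _ _ (by rwa [show s + (u + v) - t = u + v - (t - s) by abel])
  have hsw : φ s ≠ φ (s + (u + v)) := by
    rintro hsw; rw [hsw, sub_self, norm_zero] at hwt; exact hd.ne hwt
  have hsum := add_eq_of_mem_apexes hUF hd (hφ _ _ hbase) (hφ.mapsTo_apexes _ _ hs)
    (hφ.mapsTo_apexes _ _ hw) hsw
  exact (isRhombusDiagonal_sub_of_mem_apexes (hφ _ _ hbase) (hφ.mapsTo_apexes _ _ hs)
    hsum).norm_ne hUF hd hwt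

lemma apply_add_apply_of_mem_apexes (hφ : PreservesDist φ d) (hE : finrank ℝ E = 2)
    (hUE : IsURTCSpace E) (hUF : IsURTCSpace F) (hd : 0 < d) (hab : ‖a - b‖ = d)
    (hr : r ∈ apexes d a b) (hrs : r + s = a + b) : φ r + φ s = φ a + φ b := by
  have hs : s ∈ apexes d a b := by
    rw [show s = a + b - r by rw [← hrs]; abel]; exact add_sub_mem_apexes hr
  exact add_eq_of_mem_apexes hUF hd (hφ _ _ hab) (hφ.mapsTo_apexes a b hr)
    (hφ.mapsTo_apexes a b hs)
    (hφ.apply_ne_apply_of_isRhombusDiagonal hE hUE hUF hd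
      (isRhombusDiagonal_sub_of_mem_apexes hab hr hrs))

/-- Let `p`, `q = x + y - p` be the apexes over `(x, y)` and `v = y - x`. The apexes over
`(y, y + v)` are `p + v`, `q + v`, those over `(p, y)` are `x`, `p + v`, and those over `(q, y)`
are `x`, `q + v`; the four sum rules combine to the claim. -/
lemma apply_add_sub (hφ : PreservesDist φ d) (hE : finrank ℝ E = 2) (hUE : IsURTCSpace E)
    (hUF : IsURTCSpace F) (hd : 0 < d) (hxy : ‖x - y‖ = d) :
    φ (y + (y - x)) = φ y + (φ y - φ x) := by
  obtain ⟨p, hp⟩ := apexes_nonempty hUE hd hxy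
  have hq := add_sub_mem_apexes hp
  have key : ∀ r ∈ apexes d x y, φ x + φ (r + (y - x)) = φ r + φ y := fun r hr =>
    hφ.apply_add_apply_of_mem_apexes hE hUE hUF hd (by rw [norm_sub_rev, hr.2])
      ⟨by rw [norm_sub_rev, hr.1], by rw [norm_sub_rev, hxy]⟩ (by abel)
  have hpv : p + (y - x) ∈ apexes d y (y + (y - x)) := by
    constructor
    · rw [show y - (p + (y - x)) = x - p by abel, hp.1]
    · rw [show y + (y - x) - (p + (y - x)) = y - p by abel, hp.2]
  have hsum₁ := hφ.apply_add_apply_of_mem_apexes hE hUE hUF hd hxy hp (s := x + y - p)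
    (by abel)
  have hsum₂ := hφ.apply_add_apply_of_mem_apexes hE hUE hUF hd
    (by rwa [show y - (y + (y - x)) = x - y by abel]) hpv (s := x + y - p + (y - x)) (by abel)
  linear_combination (norm := module) key p hp + key _ hq - hsum₂ + hsum₁

lemma apply_add_nsmul (hφ : PreservesDist φ d) (hE : finrank ℝ E = 2) (hUE : IsURTCSpace E)
    (hUF : IsURTCSpace F) (hd : 0 < d) (x : E) {v : E} (hv : ‖v‖ = d) (k : ℕ) :
    φ (x + k • v) = φ x + k • (φ (x + v) - φ x) := by
  induction k using Nat.twoStepInduction with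
  | zero => simp
  | one => simp
  | more k ih₀ ih₁ =>
    have h := hφ.apply_add_sub hE hUE hUF hd (x := x + k • v) (y := x + (k + 1) • v)
      (by rw [show x + k • v - (x + (k + 1) • v) = -v by module, norm_neg, hv])
    rw [show x + (k + 1) • v + (x + (k + 1) • v - (x + k • v)) = x + (k + 2) • v by module,
      ih₁, ih₀] at h
    rw [h]; module

lemma natCast_mul (hφ : PreservesDist φ d) (hE : finrank ℝ E = 2) (hUE : IsURTCSpace E)
    (hUF : IsURTCSpace F) (hd : 0 < d) (n : ℕ) : PreservesDist φ (n * d) := by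
  intro x y hxy
  rcases n.eq_zero_or_pos with rfl | hn
  · rw [Nat.cast_zero, zero_mul, norm_eq_zero, sub_eq_zero] at hxy ⊢
    rw [hxy]
  have hn' : (n : ℝ) ≠ 0 := by positivity
  set v := (n : ℝ)⁻¹ • (y - x)
  have hv : ‖v‖ = d := by
    rw [norm_smul, norm_sub_rev, hxy, norm_inv, Real.norm_natCast, inv_mul_cancel_left₀ hn']
  have hy : y = x + n • v := by
    rw [← Nat.cast_smul_eq_nsmul ℝ, smul_inv_smul₀ hn']; abel
  rw [hy, hφ.apply_add_nsmul hE hUE hUF hd x hv, sub_add_cancel_left, norm_neg,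
    RCLike.norm_nsmul ℝ, hφ _ _ (by rwa [add_sub_cancel_left]), nsmul_eq_mul]

end PreservesDist

end PreservesDist

/-- `ℝ²` with `N` as its norm; a type synonym, since `ℝ × ℝ` already carries the sup norm. -/
def NormedPlane (_ : ℝ × ℝ → ℝ) : Type := ℝ × ℝ

namespace NormedPlane

variable {N : ℝ × ℝ → ℝ}

instance : AddCommGroup (NormedPlane N) := inferInstanceAs (AddCommGroup (ℝ × ℝ))

instance : Module ℝ (NormedPlane N) := inferInstanceAs (Module ℝ (ℝ × ℝ))

instance : FiniteDimensional ℝ (NormedPlane N) := inferInstanceAs (FiniteDimensional ℝ (ℝ × ℝ))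

instance : Norm (NormedPlane N) := ⟨N⟩

lemma finrank_eq_two : finrank ℝ (NormedPlane N) = 2 :=
  show finrank ℝ (ℝ × ℝ) = 2 by simp

end NormedPlane

namespace IsNorm

variable {N : ℝ × ℝ → ℝ}

lemma map_zero (hN : IsNorm N) : N 0 = 0 := by
  simpa using hN.smul_eq 0 0

lemma nonneg (hN : IsNorm N) (x : ℝ × ℝ) : 0 ≤ N x := by
  have h := hN.add_le x ((-1 : ℝ) • x)
  rw [hN.smul_eq, show x + (-1 : ℝ) • x = 0 by module, hN.map_zero] at h
  norm_num at h
  linarith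

lemma normedSpaceCore (hN : IsNorm N) : NormedSpace.Core ℝ (NormedPlane N) where
  norm_nonneg := hN.nonneg
  norm_smul := hN.smul_eq
  norm_triangle := hN.add_le
  norm_eq_zero_iff x := ⟨hN.eq_zero_of x, fun h => h ▸ hN.map_zero⟩

end IsNorm

/-- For a URTC-norm, a map preserving distance `d` preserves distance `n * d` for every
positive integer `n`; moreover collinear configurations `d, (n-1)d, nd` are preserved. -/
theorem preserves_multiples (N : ℝ × ℝ → ℝ) (hN : IsNorm N) (hU : IsURTC N)
    (d : ℝ) (hd : 0 < d) (φ : ℝ × ℝ → ℝ × ℝ)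
    (hφ : ∀ x y : ℝ × ℝ, N (x - y) = d → N (φ x - φ y) = d) :
    ∀ n : ℕ, 0 < n →
      (∀ x y : ℝ × ℝ, N (x - y) = n * d → N (φ x - φ y) = n * d) ∧
      (∀ a b c : ℝ × ℝ, N (a - b) = d → N (b - c) = ((n : ℝ) - 1) * d →
        N (a - c) = n * d →
        N (φ a - φ b) = d ∧ N (φ b - φ c) = ((n : ℝ) - 1) * d ∧
          N (φ a - φ c) = n * d) := by
  let _ := NormedAddCommGroup.ofCore hN.normedSpaceCore
  let _ := NormedSpace.ofCore hN.normedSpaceCore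
  have hU' : IsURTCSpace (NormedPlane N) := hU
  have hφ' : PreservesDist (E := NormedPlane N) (F := NormedPlane N) φ d := hφ
  have hmul := hφ'.natCast_mul NormedPlane.finrank_eq_two hU' hU' hd
  intro n hn
  refine ⟨hmul n, fun a b c hab hbc hac => ⟨hφ a b hab, ?_, hmul n a c hac⟩⟩
  rw [← Nat.cast_pred hn] at hbc ⊢
  exact hmul (n - 1) b c hbc
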